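/- arXiv:1604.02216 — 6 statements merged into one kernel-verified Lean document; each statement's English description precedes it below -/
import Mathlib

section
/- Under the virtual-queue update rule, for every iteration t ≥ 1 one has ‖Q(t)‖² ≥ ‖g(x(t−1))‖², where g(x) = (g_1(x),…,g_m(x)) and ‖·‖ is the Euclidean norm on ℝ^m. -/
noncomputable def gvec {n m : ℕ} (g : Fin m → EuclideanSpace ℝ (Fin n) → ℝ)
    (x : EuclideanSpace ℝ (Fin n)) : EuclideanSpace ℝ (Fin m) :=
  WithLp.toLp 2 (fun k => g k x)

/-!
Every queue entry stays nonnegative, since `max (-a) (q + a) ≥ |a|` whenever `q ≥ 0`.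
Applying the same inequality once more at step `t ≥ 1` gives `|g_k(x(t-1))| ≤ Q_k(t)`
coordinatewise, and the Euclidean norm is monotone in the absolute values of the coordinates.
-/

theorem abs_le_max_neg_add {α : Type*} [AddCommGroup α] [LinearOrder α] [IsOrderedAddMonoid α]
    {a q : α} (hq : 0 ≤ q) : |a| ≤ max (-a) (q + a) := by
  rw [abs_eq_max_neg]
  exact max_le (le_max_of_le_right (le_add_of_nonneg_left hq)) (le_max_left _ _)

theorem EuclideanSpace.norm_le_norm_of_forall_norm_le {𝕜 ι : Type*} [RCLike 𝕜] [Fintype ι]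
    {u v : EuclideanSpace 𝕜 ι} (h : ∀ i, ‖u i‖ ≤ ‖v i‖) : ‖u‖ ≤ ‖v‖ := by
  rw [← pow_le_pow_iff_left₀ (norm_nonneg u) (norm_nonneg v) two_ne_zero,
    EuclideanSpace.norm_sq_eq, EuclideanSpace.norm_sq_eq]
  gcongr with i
  exact h i

section VirtualQueue

variable {a q : ℕ → ℝ} (h₀ : q 0 = max 0 (-a 0))
  (hsucc : ∀ t, q (t + 1) = max (-a (t + 1)) (q t + a (t + 1)))
include h₀ hsucc

theorem virtualQueue_nonneg (t : ℕ) : 0 ≤ q t := by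
  induction t with
  | zero => exact h₀ ▸ le_max_left _ _
  | succ t ih => exact hsucc t ▸ (abs_nonneg _).trans (abs_le_max_neg_add ih)

theorem abs_le_virtualQueue_succ (t : ℕ) : |a (t + 1)| ≤ q (t + 1) :=
  hsucc t ▸ abs_le_max_neg_add (virtualQueue_nonneg h₀ hsucc t)

end VirtualQueue

/-- Indexing convention: `x 0` is `x(−1)` and `x (t+1)` is the iterate `x(t)`, so `x(t−1)` is
`x t`. -/
theorem virtual_queue_norm_ge_general {n m : ℕ}
    (g : Fin m → EuclideanSpace ℝ (Fin n) → ℝ)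
    (x : ℕ → EuclideanSpace ℝ (Fin n))
    (Q : ℕ → EuclideanSpace ℝ (Fin m))
    (hQ0 : ∀ k, Q 0 k = max 0 (-(g k (x 0))))
    (hQr : ∀ (t : ℕ) (k : Fin m),
      Q (t + 1) k = max (-(g k (x (t + 1)))) (Q t k + g k (x (t + 1)))) :
    ∀ t : ℕ, 1 ≤ t → ‖gvec g (x t)‖ ^ 2 ≤ ‖Q t‖ ^ 2 := by
  intro t ht
  obtain ⟨s, rfl⟩ := Nat.exists_eq_add_of_le' ht
  have hcoord (k : Fin m) : |g k (x (s + 1))| ≤ Q (s + 1) k :=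
    abs_le_virtualQueue_succ (a := fun t => g k (x t)) (q := fun t => Q t k) (hQ0 k)
      (fun t => hQr t k) s
  gcongr
  refine EuclideanSpace.norm_le_norm_of_forall_norm_le fun k => ?_
  simpa only [gvec, PiLp.toLp_apply, Real.norm_eq_abs] using hcoord k |>.trans (le_abs_self _)

/-- Virtual queue property for `t ≥ 1`.  Indexing convention: `x 0` denotes `x(−1)`
and `x (t+1)` denotes the iterate `x(t)`, so `Q 0 k = max {0, −g_k(x(−1))}` and
`Q (t+1) k = max {−g_k(x(t)), Q t k + g_k(x(t))}`.  Then for all `t ≥ 1`,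
`‖Q(t)‖² ≥ ‖g(x(t−1))‖²`; in the shifted indexing `x(t−1)` is `x t`. -/
theorem virtual_queue_norm_ge {n m : ℕ}
    (X : Set (EuclideanSpace ℝ (Fin n)))
    (g : Fin m → EuclideanSpace ℝ (Fin n) → ℝ)
    (x : ℕ → EuclideanSpace ℝ (Fin n)) (hx : ∀ t, x t ∈ X)
    (Q : ℕ → EuclideanSpace ℝ (Fin m))
    (hQ0 : ∀ k, Q 0 k = max 0 (-(g k (x 0))))
    (hQr : ∀ (t : ℕ) (k : Fin m),
      Q (t + 1) k = max (-(g k (x (t + 1)))) (Q t k + g k (x (t + 1)))) :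
    ∀ t : ℕ, 1 ≤ t → ‖gvec g (x t)‖ ^ 2 ≤ ‖Q t‖ ^ 2 :=
  virtual_queue_norm_ge_general g x Q hQ0 hQr
end

section
/- Under the virtual-queue update rule, for every t ≥ 1 and every k ∈ {1,…,m} one has Q_k(t) ≥ Σ_{τ=0}^{t−1} g_k(x(τ)). -/
/-- Virtual queue lower bound by partial constraint sums.  Indexing convention:
`x 0` denotes `x(−1)` and `x (τ+1)` denotes the iterate `x(τ)`, so
`Q 0 k = max {0, −g_k(x(−1))}` and `Q (t+1) k = max {−g_k(x(t)), Q t k + g_k(x(t))}`.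
Then for every `t ≥ 1` and every `k`, `Q_k(t) ≥ Σ_{τ=0}^{t−1} g_k(x(τ))`. -/
theorem virtual_queue_ge_sum {n m : ℕ}
    (X : Set (EuclideanSpace ℝ (Fin n)))
    (g : Fin m → EuclideanSpace ℝ (Fin n) → ℝ)
    (x : ℕ → EuclideanSpace ℝ (Fin n)) (hx : ∀ t, x t ∈ X)
    (Q : ℕ → EuclideanSpace ℝ (Fin m))
    (hQ0 : ∀ k, Q 0 k = max 0 (-(g k (x 0))))
    (hQr : ∀ (t : ℕ) (k : Fin m),
      Q (t + 1) k = max (-(g k (x (t + 1)))) (Q t k + g k (x (t + 1)))) :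
    ∀ t : ℕ, 1 ≤ t → ∀ k : Fin m,
      ∑ τ ∈ Finset.range t, g k (x (τ + 1)) ≤ Q t k := by
  intro t ht k
  induction t with
  | zero => omega
  | succ t ih =>
    rw [Finset.sum_range_succ, hQr]
    rcases Nat.eq_or_lt_of_le ht with h | h
    · have : t = 0 := by omega
      subst this
      rw [Finset.sum_range_zero, zero_add, hQ0]
      calc g k (x 1) ≤ 0 + g k (x 1) := by ring_nf; exact le_rfl
        _ ≤ max 0 (-g k (x 0)) + g k (x 1) := by gcongr; exact le_max_left _ _
        _ ≤ max (-g k (x 1)) (max 0 (-g k (x 0)) + g k (x 1)) := le_max_right _ _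
    · have ht' : 1 ≤ t := by omega
      calc ∑ τ ∈ Finset.range t, g k (x (τ + 1)) + g k (x (t + 1))
          ≤ Q t k + g k (x (t + 1)) := by gcongr; exact ih ht'
        _ ≤ max (-g k (x (t + 1))) (Q t k + g k (x (t + 1))) := le_max_right _ _
end

section
/- Under the virtual-queue update rule, the Lyapunov drift Δ(t) = (1/2)(‖Q(t+1)‖² − ‖Q(t)‖²) satisfies Δ(t) ≤ Q(t)ᵀ g(x(t)) + ‖g(x(t))‖² for every iteration t ∈ {0,1,2,…}, where g(x) = (g_1(x),…,g_m(x)), Q(t)ᵀ g(x(t)) = Σ_{k=1}^m Q_k(t) g_k(x(t)), and ‖·‖ is the Euclidean norm on ℝ^m. -/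
lemma max_neg_add_sq_sub_sq_le (q a : ℝ) :
    max (-a) (q + a) ^ 2 - q ^ 2 ≤ 2 * (q * a) + 2 * a ^ 2 := by
  rcases max_cases (-a) (q + a) with ⟨h, _⟩ | ⟨h, _⟩ <;> rw [h]
  · nlinarith [sq_nonneg (q + a)]
  · nlinarith [sq_nonneg a]

lemma EuclideanSpace.half_norm_sq_sub_norm_sq_le_of_eq_max {ι : Type*} [Fintype ι]
    (q q' a : EuclideanSpace ℝ ι) (hq' : ∀ k, q' k = max (-a k) (q k + a k)) :
    (1 / 2) * (‖q'‖ ^ 2 - ‖q‖ ^ 2) ≤ (∑ k, q k * a k) + ‖a‖ ^ 2 := by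
  have hcoord : ∀ k, q' k ^ 2 - q k ^ 2 ≤ 2 * (q k * a k) + 2 * a k ^ 2 := fun k => by
    rw [hq' k]; exact max_neg_add_sq_sub_sq_le (q k) (a k)
  have hsum := Finset.sum_le_sum fun k (_ : k ∈ Finset.univ) => hcoord k
  simp only [Finset.sum_sub_distrib, Finset.sum_add_distrib, ← Finset.mul_sum] at hsum
  simp only [EuclideanSpace.real_norm_sq_eq]
  linarith

/-- Indexing convention: `x (t+1)` denotes the iterate `x(t)`, the sequence starting at `x(−1)`. -/
theorem lyapunov_drift_bound_general {n m : ℕ}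
    (g : Fin m → EuclideanSpace ℝ (Fin n) → ℝ)
    (x : ℕ → EuclideanSpace ℝ (Fin n))
    (Q : ℕ → EuclideanSpace ℝ (Fin m))
    (hQr : ∀ (t : ℕ) (k : Fin m),
      Q (t + 1) k = max (-(g k (x (t + 1)))) (Q t k + g k (x (t + 1)))) :
    ∀ t : ℕ,
      (1 / 2) * (‖Q (t + 1)‖ ^ 2 - ‖Q t‖ ^ 2) ≤
        (∑ k, Q t k * g k (x (t + 1))) + ‖gvec g (x (t + 1))‖ ^ 2 := fun t =>
  EuclideanSpace.half_norm_sq_sub_norm_sq_le_of_eq_max (Q t) (Q (t + 1)) (gvec g (x (t + 1)))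
    (hQr t)

/-- Lyapunov drift bound.  Indexing convention: `x 0` denotes `x(−1)` and
`x (t+1)` denotes the iterate `x(t)`, so `Q 0 k = max {0, −g_k(x(−1))}` and
`Q (t+1) k = max {−g_k(x(t)), Q t k + g_k(x(t))}`.  Then for every iteration `t`,
`Δ(t) = (1/2)(‖Q(t+1)‖² − ‖Q(t)‖²) ≤ Q(t)ᵀ g(x(t)) + ‖g(x(t))‖²`. -/
theorem lyapunov_drift_bound {n m : ℕ}
    (X : Set (EuclideanSpace ℝ (Fin n)))
    (g : Fin m → EuclideanSpace ℝ (Fin n) → ℝ)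
    (x : ℕ → EuclideanSpace ℝ (Fin n)) (hx : ∀ t, x t ∈ X)
    (Q : ℕ → EuclideanSpace ℝ (Fin m))
    (hQ0 : ∀ k, Q 0 k = max 0 (-(g k (x 0))))
    (hQr : ∀ (t : ℕ) (k : Fin m),
      Q (t + 1) k = max (-(g k (x (t + 1)))) (Q t k + g k (x (t + 1)))) :
    ∀ t : ℕ,
      (1 / 2) * (‖Q (t + 1)‖ ^ 2 - ‖Q t‖ ^ 2) ≤
        (∑ k, Q t k * g k (x (t + 1))) + ‖gvec g (x (t + 1))‖ ^ 2 :=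
  lyapunov_drift_bound_general g x Q hQr
end

section
/- Suppose x* ∈ X and λ* ∈ ℝ^m with λ*_k ≥ 0 for all k satisfy the strong-duality identity inf_{x ∈ X} ( f(x) + Σ_{k=1}^m λ*_k g_k(x) ) = f(x*). Then under the virtual-queue update rule, for every t ≥ 1, Σ_{τ=0}^{t−1} f(x(τ)) ≥ t·f(x*) − ‖λ*‖·‖Q(t)‖, where ‖·‖ is the Euclidean norm on ℝ^m. -/
/-!
Weak duality at the iterates gives `f(x*) ≤ f(x(τ)) + Σ_k λ*_k g_k(x(τ))` for every `τ`.
Since `Q_k(τ+1) ≥ Q_k(τ) + g_k(x(τ))` and `Q_k(0) ≥ 0`, the queue telescopes to an upper bound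
on the accumulated constraint values, `Σ_{τ<t} g_k(x(τ)) ≤ Q_k(t)`; weighting by `λ*_k ≥ 0` and
applying Cauchy–Schwarz bounds the summed penalty by `‖λ*‖ ‖Q(t)‖`.
-/

open Finset

theorem sum_range_le_of_add_le_succ {Q a : ℕ → ℝ} (h0 : 0 ≤ Q 0)
    (hstep : ∀ t, Q t + a t ≤ Q (t + 1)) (t : ℕ) : ∑ τ ∈ range t, a τ ≤ Q t :=
  calc ∑ τ ∈ range t, a τ ≤ ∑ τ ∈ range t, (Q (τ + 1) - Q τ) :=
        sum_le_sum fun τ _ => by linarith [hstep τ]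
    _ = Q t - Q 0 := sum_range_sub Q t
    _ ≤ Q t := by linarith

theorem sum_sum_mul_le_sum_mul {ι κ : Type*} (s : Finset ι) (u : Finset κ) {w q : κ → ℝ}
    {G : ι → κ → ℝ} (hw : ∀ k ∈ u, 0 ≤ w k) (hG : ∀ k ∈ u, ∑ i ∈ s, G i k ≤ q k) :
    ∑ i ∈ s, ∑ k ∈ u, w k * G i k ≤ ∑ k ∈ u, w k * q k := by
  rw [sum_comm]
  exact sum_le_sum fun k hk => by
    rw [← mul_sum]
    exact mul_le_mul_of_nonneg_left (hG k hk) (hw k hk)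

theorem EuclideanSpace.sum_mul_le_norm_mul_norm {ι : Type*} [Fintype ι]
    (v w : EuclideanSpace ℝ ι) : ∑ k, v k * w k ≤ ‖v‖ * ‖w‖ := by
  simpa only [PiLp.inner_apply, RCLike.inner_apply, conj_trivial, mul_comm] using
    real_inner_le_norm v w

theorem objective_lower_bound_from_strong_duality_general {n m : ℕ}
    (X : Set (EuclideanSpace ℝ (Fin n)))
    (f : EuclideanSpace ℝ (Fin n) → ℝ)
    (g : Fin m → EuclideanSpace ℝ (Fin n) → ℝ)
    (x : ℕ → EuclideanSpace ℝ (Fin n)) (hx : ∀ t, x t ∈ X)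
    (Q : ℕ → EuclideanSpace ℝ (Fin m))
    (hQ0 : ∀ k, Q 0 k = max 0 (-(g k (x 0))))
    (hQr : ∀ (t : ℕ) (k : Fin m),
      Q (t + 1) k = max (-(g k (x (t + 1)))) (Q t k + g k (x (t + 1))))
    (xstar : EuclideanSpace ℝ (Fin n))
    (lam : EuclideanSpace ℝ (Fin m)) (hlam : ∀ k, 0 ≤ lam k)
    (hduality : IsGLB ((fun z => f z + ∑ k, lam k * g k z) '' X) (f xstar)) :
    ∀ t : ℕ, 1 ≤ t →
      (t : ℝ) * f xstar - ‖lam‖ * ‖Q t‖ ≤ ∑ τ ∈ Finset.range t, f (x (τ + 1)) := by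
  intro t _
  have hqueue (k : Fin m) : ∑ τ ∈ range t, g k (x (τ + 1)) ≤ Q t k :=
    sum_range_le_of_add_le_succ (hQ0 k ▸ le_max_left _ _)
      (fun s => hQr s k ▸ le_max_right _ _) t
  have hweak : (t : ℝ) * f xstar ≤
      ∑ τ ∈ range t, (f (x (τ + 1)) + ∑ k, lam k * g k (x (τ + 1))) := by
    simpa using card_nsmul_le_sum (range t) _ _ fun τ _ => hduality.1 ⟨_, hx (τ + 1), rfl⟩
  have hpenalty : ∑ τ ∈ range t, ∑ k, lam k * g k (x (τ + 1)) ≤ ‖lam‖ * ‖Q t‖ :=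
    (sum_sum_mul_le_sum_mul _ _ (fun k _ => hlam k) (fun k _ => hqueue k)).trans
      (EuclideanSpace.sum_mul_le_norm_mul_norm lam (Q t))
  rw [sum_add_distrib] at hweak
  linarith

/-- Objective lower bound from strong duality.  Indexing convention: `x 0` denotes
`x(−1)` and `x (τ+1)` denotes the iterate `x(τ)`, so `Q 0 k = max {0, −g_k(x(−1))}`
and `Q (t+1) k = max {−g_k(x(t)), Q t k + g_k(x(t))}`.  Suppose `xstar ∈ X` and
`lam ≥ 0` satisfy the strong-duality identity
`inf_{x ∈ X} (f(x) + Σ_k lam_k g_k(x)) = f(xstar)` (stated as an `IsGLB`).  Then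
for every `t ≥ 1`, `Σ_{τ=0}^{t−1} f(x(τ)) ≥ t·f(xstar) − ‖lam‖·‖Q(t)‖`. -/
theorem objective_lower_bound_from_strong_duality {n m : ℕ}
    (X : Set (EuclideanSpace ℝ (Fin n)))
    (f : EuclideanSpace ℝ (Fin n) → ℝ)
    (g : Fin m → EuclideanSpace ℝ (Fin n) → ℝ)
    (x : ℕ → EuclideanSpace ℝ (Fin n)) (hx : ∀ t, x t ∈ X)
    (Q : ℕ → EuclideanSpace ℝ (Fin m))
    (hQ0 : ∀ k, Q 0 k = max 0 (-(g k (x 0))))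
    (hQr : ∀ (t : ℕ) (k : Fin m),
      Q (t + 1) k = max (-(g k (x (t + 1)))) (Q t k + g k (x (t + 1))))
    (xstar : EuclideanSpace ℝ (Fin n)) (hxstar : xstar ∈ X)
    (lam : EuclideanSpace ℝ (Fin m)) (hlam : ∀ k, 0 ≤ lam k)
    (hduality : IsGLB ((fun z => f z + ∑ k, lam k * g k z) '' X) (f xstar)) :
    ∀ t : ℕ, 1 ≤ t →
      (t : ℝ) * f xstar - ‖lam‖ * ‖Q t‖ ≤ ∑ τ ∈ Finset.range t, f (x (τ + 1)) :=
  objective_lower_bound_from_strong_duality_general X f g x hx Q hQ0 hQr xstar lam hlam hduality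
end

section
/- Let x* ∈ X be an optimal solution of min{ f(x) : g_k(x) ≤ 0 ∀k, x ∈ X }. Then for every iteration t ≥ 0 of the algorithm, with Δ(t) = (1/2)(‖Q(t+1)‖² − ‖Q(t)‖²), one has Δ(t) + f(x(t)) ≤ f(x*) + (1/(2γ))(‖x* − x(t−1)‖² − ‖x* − x(t)‖²) + (1/2)(‖g(x(t))‖² − ‖g(x(t−1))‖²) + (1/2)(β² + L_f + ‖Q(t)‖·‖L_g‖ + C·‖L_g‖ − 1/γ)·‖x(t) − x(t−1)‖². -/
open Set AffineMap
open scoped RealInnerProductSpace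

theorem EuclideanSpace.sum_mul_eq_real_inner {ι : Type*} [Fintype ι] (u v : EuclideanSpace ℝ ι) :
    ∑ k, u k * v k = ⟪u, v⟫ := by
  simp only [PiLp.inner_apply, RCLike.inner_apply, conj_trivial, mul_comm]

theorem EuclideanSpace.norm_sq_sub_norm_sq_le_of_queue {ι : Type*} [Fintype ι]
    {Q Q' G : EuclideanSpace ℝ ι} (hQ' : ∀ k, Q' k = max (-G k) (Q k + G k)) :
    ‖Q'‖ ^ 2 - ‖Q‖ ^ 2 ≤ 2 * ⟪Q, G⟫ + 2 * ‖G‖ ^ 2 := by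
  have hcoord : ∀ k, Q' k ^ 2 ≤ (Q + G) k ^ 2 + G k ^ 2 := fun k => by
    rw [hQ' k, PiLp.add_apply]
    rcases max_choice (-G k) (Q k + G k) with h | h <;> rw [h] <;> nlinarith
  have hnorm : ‖Q'‖ ^ 2 ≤ ‖Q + G‖ ^ 2 + ‖G‖ ^ 2 := by
    simp only [EuclideanSpace.real_norm_sq_eq, ← Finset.sum_add_distrib]
    exact Finset.sum_le_sum fun k _ => hcoord k
  rw [norm_add_sq_real] at hnorm
  linarith

section

variable {E : Type*} [NormedAddCommGroup E] [InnerProductSpace ℝ E]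

theorem real_inner_sub_sub_nonpos_of_forall_norm_sub_le {X : Set E} (hX : Convex ℝ X)
    {u b : E} (hb : b ∈ X) (hmin : ∀ y ∈ X, ‖b - u‖ ≤ ‖y - u‖) :
    ∀ w ∈ X, ⟪u - b, w - b⟫ ≤ 0 := by
  have : Nonempty X := ⟨⟨b, hb⟩⟩
  refine (norm_eq_iInf_iff_real_inner_le_zero hX hb).1 (le_antisymm ?_ ?_)
  · exact le_ciInf fun w => by simpa only [norm_sub_rev u] using hmin w w.2
  · exact ciInf_le (f := fun w : X => ‖u - w‖)
      ⟨0, by rintro r ⟨w, rfl⟩; exact norm_nonneg _⟩ ⟨b, hb⟩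

theorem real_inner_sub_le_of_projected_step {X : Set E} (hX : Convex ℝ X) {γ : ℝ} (hγ : 0 < γ)
    {a b d : E} (hb : b ∈ X) (hproj : ∀ y ∈ X, ‖b - (a - γ • d)‖ ≤ ‖y - (a - γ • d)‖)
    {y : E} (hy : y ∈ X) :
    ⟪d, b - y⟫ ≤ 1 / (2 * γ) * (‖y - a‖ ^ 2 - ‖y - b‖ ^ 2 - ‖b - a‖ ^ 2) := by
  have hvi := real_inner_sub_sub_nonpos_of_forall_norm_sub_le hX hb hproj y hy
  have hsplit : a - γ • d - b = (a - b) - γ • d := by abel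
  have hpyth : ‖y - a‖ ^ 2 = ‖y - b‖ ^ 2 + 2 * ⟪y - b, b - a⟫ + ‖b - a‖ ^ 2 := by
    rw [← norm_add_sq_real, sub_add_sub_cancel]
  have hflip : ⟪a - b, y - b⟫ = -⟪y - b, b - a⟫ := by
    rw [real_inner_comm, ← inner_neg_right, neg_sub]
  have hflip' : ⟪d, y - b⟫ = -⟪d, b - y⟫ := by rw [← inner_neg_right, neg_sub]
  rw [hsplit, inner_sub_left, real_inner_smul_left, hflip, hflip'] at hvi
  rw [div_mul_eq_mul_div, one_mul, le_div_iff₀ (by positivity)]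
  linarith

variable [CompleteSpace E]

theorem HasGradientAt.hasDerivAt_comp_lineMap {f : E → ℝ} {G a b : E} {s : ℝ}
    (h : HasGradientAt f G (lineMap a b s)) :
    HasDerivAt (fun s => f (lineMap a b s)) ⟪G, b - a⟫ s := by
  simpa [Function.comp_def] using h.hasFDerivAt.comp_hasDerivAt s hasDerivAt_lineMap

theorem ConvexOn.add_inner_le_of_hasGradientAt {X : Set E} {f : E → ℝ} {G a y : E}
    (hf : ConvexOn ℝ X f) (hG : HasGradientAt f G a) (ha : a ∈ X) (hy : y ∈ X) :
    f a + ⟪G, y - a⟫ ≤ f y := by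
  have hline : ConvexOn ℝ (lineMap a y ⁻¹' X) (fun s => f (lineMap a y s)) :=
    hf.comp_affineMap (lineMap a y)
  have := hline.le_slope_of_hasDerivAt (x := 0) (y := 1) (by simpa using ha) (by simpa using hy)
    zero_lt_one (HasGradientAt.hasDerivAt_comp_lineMap (by simpa using hG))
  simp only [slope_def_field, lineMap_apply_one, lineMap_apply_zero, sub_zero, div_one] at this
  linarith

theorem le_add_inner_add_of_lipschitz_gradient {X : Set E} {f : E → ℝ} {G : E → E} {L : ℝ}
    (hX : Convex ℝ X) (hf : ∀ z ∈ X, HasGradientAt f (G z) z)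
    (hG : ∀ z ∈ X, ∀ w ∈ X, ‖G z - G w‖ ≤ L * ‖z - w‖) {a b : E} (ha : a ∈ X) (hb : b ∈ X) :
    f b ≤ f a + ⟪G a, b - a⟫ + L / 2 * ‖b - a‖ ^ 2 := by
  have hderiv : ∀ s ∈ Icc (0 : ℝ) 1,
      HasDerivAt (fun s => f (lineMap a b s)) ⟪G (lineMap a b s), b - a⟫ s := fun s hs =>
    HasGradientAt.hasDerivAt_comp_lineMap (hf _ (hX.lineMap_mem ha hb hs))
  have hmajorant : ∀ s : ℝ,
      HasDerivAt (fun s => f a + s * ⟪G a, b - a⟫ + L / 2 * s ^ 2 * ‖b - a‖ ^ 2)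
        (⟪G a, b - a⟫ + L * s * ‖b - a‖ ^ 2) s := by
    intro s
    refine ((((hasDerivAt_id' s).mul_const ⟪G a, b - a⟫).const_add (f a)).add
      (((hasDerivAt_pow 2 s).const_mul (L / 2)).mul_const (‖b - a‖ ^ 2))).congr_deriv ?_
    push_cast; ring
  have key := image_le_of_deriv_right_le_deriv_boundary (a := 0) (b := 1)
    (fun s hs => (hderiv s hs).continuousAt.continuousWithinAt)
    (fun s hs => (hderiv s (Ico_subset_Icc_self hs)).hasDerivWithinAt)
    (by simp) (fun s _ => (hmajorant s).continuousAt.continuousWithinAt)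
    (fun s _ => (hmajorant s).hasDerivWithinAt) ?_ (right_mem_Icc.2 zero_le_one)
  · simpa using key
  intro s hs
  have hz : lineMap a b s - a = s • (b - a) := lineMap_vsub_left a b s
  have hlip := hG _ (hX.lineMap_mem ha hb (Ico_subset_Icc_self hs)) a ha
  rw [hz, norm_smul, Real.norm_of_nonneg hs.1] at hlip
  have hcs := real_inner_le_norm (G (lineMap a b s) - G a) (b - a)
  rw [inner_sub_left] at hcs
  nlinarith [mul_le_mul_of_nonneg_right hlip (norm_nonneg (b - a))]

theorem ConvexOn.sub_le_inner_add_of_lipschitz_gradient {X : Set E} {f : E → ℝ} {G : E → E}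
    {L : ℝ} (hfc : ConvexOn ℝ X f) (hf : ∀ z ∈ X, HasGradientAt f (G z) z)
    (hG : ∀ z ∈ X, ∀ w ∈ X, ‖G z - G w‖ ≤ L * ‖z - w‖) {a b y : E}
    (ha : a ∈ X) (hb : b ∈ X) (hy : y ∈ X) :
    f b - f y ≤ ⟪G a, b - y⟫ + L / 2 * ‖b - a‖ ^ 2 := by
  have hdesc := le_add_inner_add_of_lipschitz_gradient hfc.1 hf hG ha hb
  have hgrad := hfc.add_inner_le_of_hasGradientAt (hf a ha) ha hy
  have hsplit : ⟪G a, b - y⟫ = ⟪G a, b - a⟫ - ⟪G a, y - a⟫ := by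
    rw [← inner_sub_right, sub_sub_sub_cancel_right]
  linarith

theorem sub_add_sum_mul_sub_le_inner_add {ι : Type*} [Fintype ι] {X : Set E}
    {f : E → ℝ} {Gf : E → E} {Lf : ℝ} {g : ι → E → ℝ} {Gg : ι → E → E} {Lg w : ι → ℝ}
    (hfc : ConvexOn ℝ X f) (hf : ∀ z ∈ X, HasGradientAt f (Gf z) z)
    (hGf : ∀ z ∈ X, ∀ z' ∈ X, ‖Gf z - Gf z'‖ ≤ Lf * ‖z - z'‖)
    (hgc : ∀ k, ConvexOn ℝ X (g k)) (hg : ∀ k, ∀ z ∈ X, HasGradientAt (g k) (Gg k z) z)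
    (hGg : ∀ k, ∀ z ∈ X, ∀ z' ∈ X, ‖Gg k z - Gg k z'‖ ≤ Lg k * ‖z - z'‖) (hw : ∀ k, 0 ≤ w k)
    {a b y : E} (ha : a ∈ X) (hb : b ∈ X) (hy : y ∈ X) :
    f b - f y + ∑ k, w k * (g k b - g k y) ≤
      ⟪Gf a + ∑ k, w k • Gg k a, b - y⟫ + (Lf + ∑ k, w k * Lg k) / 2 * ‖b - a‖ ^ 2 := by
  have hgk : ∀ k, w k * (g k b - g k y) ≤
      w k * ⟪Gg k a, b - y⟫ + w k * Lg k / 2 * ‖b - a‖ ^ 2 := fun k => by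
    have := mul_le_mul_of_nonneg_left
      ((hgc k).sub_le_inner_add_of_lipschitz_gradient (hg k) (hGg k) ha hb hy) (hw k)
    linarith
  have hsum := Finset.sum_le_sum fun k (_ : k ∈ Finset.univ) => hgk k
  have hfb := hfc.sub_le_inner_add_of_lipschitz_gradient hf hGf ha hb hy
  rw [Finset.sum_add_distrib, ← Finset.sum_mul, ← Finset.sum_div] at hsum
  simp only [inner_add_left, sum_inner, real_inner_smul_left]
  linarith

end

-- `x 0` is the paper's initial point `x(−1)`: the paper's `x(t−1)`, `x(t)` are `x t`, `x (t + 1)`.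
theorem drift_plus_penalty_bound_general {n m : ℕ}
    (X : Set (EuclideanSpace ℝ (Fin n)))
    (hXcv : Convex ℝ X)
    (f : EuclideanSpace ℝ (Fin n) → ℝ)
    (Gf : EuclideanSpace ℝ (Fin n) → EuclideanSpace ℝ (Fin n))
    (g : Fin m → EuclideanSpace ℝ (Fin n) → ℝ)
    (Gg : Fin m → EuclideanSpace ℝ (Fin n) → EuclideanSpace ℝ (Fin n))
    (Lf : ℝ) (Lg : EuclideanSpace ℝ (Fin m)) (β C : ℝ)
    (hf : ConvexOn ℝ X f)
    (hfd : ∀ z, HasGradientAt f (Gf z) z)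
    (hGfLip : ∀ z ∈ X, ∀ w ∈ X, ‖Gf z - Gf w‖ ≤ Lf * ‖z - w‖)
    (hg : ∀ k, ConvexOn ℝ X (g k))
    (hgd : ∀ (k : Fin m) z, HasGradientAt (g k) (Gg k z) z)
    (hGgLip : ∀ (k : Fin m), ∀ z ∈ X, ∀ w ∈ X, ‖Gg k z - Gg k w‖ ≤ Lg k * ‖z - w‖)
    (hgLip : ∀ z ∈ X, ∀ w ∈ X, ‖gvec g z - gvec g w‖ ≤ β * ‖z - w‖)
    (hgC : ∀ z ∈ X, ‖gvec g z‖ ≤ C)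
    (xstar : EuclideanSpace ℝ (Fin n)) (hxs : xstar ∈ X)
    (hxsFeas : ∀ k, g k xstar ≤ 0)
    (γ : ℝ) (hγ : 0 < γ)
    (x : ℕ → EuclideanSpace ℝ (Fin n)) (hxX : ∀ t, x t ∈ X)
    (Q : ℕ → EuclideanSpace ℝ (Fin m))
    (hQ0 : ∀ k, Q 0 k = max 0 (-(g k (x 0))))
    (hQr : ∀ (t : ℕ) (k : Fin m),
      Q (t + 1) k = max (-(g k (x (t + 1)))) (Q t k + g k (x (t + 1))))
    (d : ℕ → EuclideanSpace ℝ (Fin n))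
    (hd : ∀ t, d t = Gf (x t) + ∑ k, (Q t k + g k (x t)) • Gg k (x t))
    (hproj : ∀ t, ∀ y ∈ X,
      ‖x (t + 1) - (x t - γ • d t)‖ ≤ ‖y - (x t - γ • d t)‖) :
    ∀ t : ℕ,
      (1 / 2) * (‖Q (t + 1)‖ ^ 2 - ‖Q t‖ ^ 2) + f (x (t + 1)) ≤
        f xstar + (1 / (2 * γ)) * (‖xstar - x t‖ ^ 2 - ‖xstar - x (t + 1)‖ ^ 2)
          + (1 / 2) * (‖gvec g (x (t + 1))‖ ^ 2 - ‖gvec g (x t)‖ ^ 2)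
          + (1 / 2) * (β ^ 2 + Lf + ‖Q t‖ * ‖Lg‖ + C * ‖Lg‖ - 1 / γ)
            * ‖x (t + 1) - x t‖ ^ 2 := by
  have hQ_ge : ∀ t k, -g k (x t) ≤ Q t k := by
    rintro (_ | t) k
    · rw [hQ0]; exact le_max_right _ _
    · rw [hQr]; exact le_max_left _ _
  intro t
  set w := Q t + gvec g (x t)
  have hw : ∀ k, 0 ≤ w k := fun k => show 0 ≤ Q t k + g k (x t) by linarith [hQ_ge t k]
  have hgap := sub_add_sum_mul_sub_le_inner_add hf (fun z _ => hfd z) hGfLip hg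
    (fun k z _ => hgd k z) hGgLip hw (hxX t) (hxX (t + 1)) hxs
  rw [show Gf (x t) + ∑ k, w k • Gg k (x t) = d t from (hd t).symm] at hgap
  have hstep := real_inner_sub_le_of_projected_step hXcv hγ (hxX (t + 1)) (hproj t) hxs
  have hfeas : ∑ k, w k * g k (x (t + 1)) ≤ ∑ k, w k * (g k (x (t + 1)) - g k xstar) :=
    Finset.sum_le_sum fun k _ => by nlinarith [hw k, hxsFeas k]
  have hwLg : ∑ k, w k * Lg k ≤ (‖Q t‖ + C) * ‖Lg‖ := by
    rw [EuclideanSpace.sum_mul_eq_real_inner]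
    refine (real_inner_le_norm _ _).trans (mul_le_mul_of_nonneg_right ?_ (norm_nonneg _))
    linarith [norm_add_le (Q t) (gvec g (x t)), hgC _ (hxX t)]
  have hdrift :=
    EuclideanSpace.norm_sq_sub_norm_sq_le_of_queue (G := gvec g (x (t + 1))) (hQr t)
  have hg_sq : ‖gvec g (x t) - gvec g (x (t + 1))‖ ^ 2 ≤ β ^ 2 * ‖x (t + 1) - x t‖ ^ 2 := by
    rw [← mul_pow, norm_sub_rev (x (t + 1))]
    exact pow_le_pow_left₀ (norm_nonneg _) (hgLip _ (hxX t) _ (hxX (t + 1))) 2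
  rw [norm_sub_sq_real] at hg_sq
  have hpenalty : ∑ k, w k * g k (x (t + 1)) =
      ⟪Q t, gvec g (x (t + 1))⟫ + ⟪gvec g (x t), gvec g (x (t + 1))⟫ :=
    (EuclideanSpace.sum_mul_eq_real_inner w (gvec g (x (t + 1)))).trans (inner_add_left _ _ _)
  have hwLg_sq := mul_le_mul_of_nonneg_right hwLg (sq_nonneg ‖x (t + 1) - x t‖)
  have hγ_half : 1 / (2 * γ) * ‖x (t + 1) - x t‖ ^ 2 = 1 / 2 * (1 / γ) * ‖x (t + 1) - x t‖ ^ 2 := by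
    ring
  linarith

/-- Drift-plus-penalty bound (Lemma 6 of the paper).  Indexing convention: `x 0`
denotes the initial point `x(−1)` and `x (t+1)` denotes the iterate `x(t)`; thus
at iteration `t` of the paper, `x(t) = x (t+1)`, `x(t−1) = x t`, `Q(t) = Q t`.
The algorithm: `d t = ∇f(x(t−1)) + Σ_k (Q_k(t) + g_k(x(t−1)))∇g_k(x(t−1))`, and
`x(t)` is the projection of `x(t−1) − γ d(t)` onto `X`. -/
theorem drift_plus_penalty_bound {n m : ℕ}
    (X : Set (EuclideanSpace ℝ (Fin n)))
    (hXne : X.Nonempty) (hXcv : Convex ℝ X) (hXcp : IsCompact X)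
    (f : EuclideanSpace ℝ (Fin n) → ℝ)
    (Gf : EuclideanSpace ℝ (Fin n) → EuclideanSpace ℝ (Fin n))
    (g : Fin m → EuclideanSpace ℝ (Fin n) → ℝ)
    (Gg : Fin m → EuclideanSpace ℝ (Fin n) → EuclideanSpace ℝ (Fin n))
    (Lf : ℝ) (Lg : EuclideanSpace ℝ (Fin m)) (β C : ℝ)
    (hf : ConvexOn ℝ X f)
    (hfd : ∀ z, HasGradientAt f (Gf z) z)
    (hLf : 0 ≤ Lf)
    (hGfLip : ∀ z ∈ X, ∀ w ∈ X, ‖Gf z - Gf w‖ ≤ Lf * ‖z - w‖)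
    (hg : ∀ k, ConvexOn ℝ X (g k))
    (hgd : ∀ (k : Fin m) z, HasGradientAt (g k) (Gg k z) z)
    (hLg : ∀ k, 0 ≤ Lg k)
    (hGgLip : ∀ (k : Fin m), ∀ z ∈ X, ∀ w ∈ X, ‖Gg k z - Gg k w‖ ≤ Lg k * ‖z - w‖)
    (hgLip : ∀ z ∈ X, ∀ w ∈ X, ‖gvec g z - gvec g w‖ ≤ β * ‖z - w‖)
    (hgC : ∀ z ∈ X, ‖gvec g z‖ ≤ C)
    (xstar : EuclideanSpace ℝ (Fin n)) (hxs : xstar ∈ X)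
    (hxsFeas : ∀ k, g k xstar ≤ 0)
    (hxsOpt : ∀ z ∈ X, (∀ k, g k z ≤ 0) → f xstar ≤ f z)
    (γ : ℝ) (hγ : 0 < γ)
    (x : ℕ → EuclideanSpace ℝ (Fin n)) (hxX : ∀ t, x t ∈ X)
    (Q : ℕ → EuclideanSpace ℝ (Fin m))
    (hQ0 : ∀ k, Q 0 k = max 0 (-(g k (x 0))))
    (hQr : ∀ (t : ℕ) (k : Fin m),
      Q (t + 1) k = max (-(g k (x (t + 1)))) (Q t k + g k (x (t + 1))))
    (d : ℕ → EuclideanSpace ℝ (Fin n))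
    (hd : ∀ t, d t = Gf (x t) + ∑ k, (Q t k + g k (x t)) • Gg k (x t))
    (hproj : ∀ t, ∀ y ∈ X,
      ‖x (t + 1) - (x t - γ • d t)‖ ≤ ‖y - (x t - γ • d t)‖) :
    ∀ t : ℕ,
      (1 / 2) * (‖Q (t + 1)‖ ^ 2 - ‖Q t‖ ^ 2) + f (x (t + 1)) ≤
        f xstar + (1 / (2 * γ)) * (‖xstar - x t‖ ^ 2 - ‖xstar - x (t + 1)‖ ^ 2)
          + (1 / 2) * (‖gvec g (x (t + 1))‖ ^ 2 - ‖gvec g (x t)‖ ^ 2)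
          + (1 / 2) * (β ^ 2 + Lf + ‖Q t‖ * ‖Lg‖ + C * ‖Lg‖ - 1 / γ)
            * ‖x (t + 1) - x t‖ ^ 2 :=
  drift_plus_penalty_bound_general X hXcv f Gf g Gg Lf Lg β C hf hfd hGfLip hg hgd hGgLip hgLip hgC
    xstar hxs hxsFeas γ hγ x hxX Q hQ0 hQr d hd hproj
end

section
/- Let x* ∈ X be an optimal solution of min{ f(x) : g_k(x) ≤ 0 ∀k, x ∈ X }, let λ* ≥ 0 (componentwise) satisfy inf_{x ∈ X}( f(x) + Σ_k λ*_k g_k(x) ) = f(x*), and set D = β² + L_f + 2‖λ*‖‖L_g‖ + 2C‖L_g‖. If the step size γ > 0 satisfies D + ‖L_g‖·R/√γ − 1/γ ≤ 0, then at every iteration t ≥ 0 of the algorithm, ‖Q(t)‖ ≤ 2‖λ*‖ + R/√γ + C. -/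
open scoped RealInnerProductSpace
open Set AffineMap Finset

section Gradient

variable {E : Type*} [NormedAddCommGroup E] [InnerProductSpace ℝ E] [CompleteSpace E]
  {X : Set E} {h : E → ℝ} {G : E → E}

theorem hasDerivAt_comp_lineMap_of_hasGradientAt (hG : ∀ z, HasGradientAt h (G z) z)
    (z w : E) (θ : ℝ) :
    HasDerivAt (fun θ => h (lineMap z w θ)) ⟪G (lineMap z w θ), w - z⟫ θ := by
  have := (hG (lineMap z w θ)).hasFDerivAt.comp_hasDerivAt θ hasDerivAt_lineMap
  simp only [InnerProductSpace.toDual_apply_apply] at this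
  exact this

theorem ConvexOn.add_inner_le_of_hasGradientAt_s10 (hh : ConvexOn ℝ X h)
    (hG : ∀ z, HasGradientAt h (G z) z) {z w : E} (hz : z ∈ X) (hw : w ∈ X) :
    h z + ⟪G z, w - z⟫ ≤ h w := by
  have hslope := (hh.comp_affineMap (lineMap z w)).le_slope_of_hasDerivAt
    (by simpa using hz) (by simpa using hw) zero_lt_one
    (hasDerivAt_comp_lineMap_of_hasGradientAt hG z w 0)
  simp only [slope_def_field, Function.comp_apply, lineMap_apply_zero, lineMap_apply_one,
    sub_zero, div_one] at hslope
  linarith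

theorem le_add_inner_add_sq_of_lipschitz_gradient (hX : Convex ℝ X)
    (hG : ∀ z, HasGradientAt h (G z) z) {L : ℝ}
    (hGL : ∀ z ∈ X, ∀ w ∈ X, ‖G z - G w‖ ≤ L * ‖z - w‖) {z w : E} (hz : z ∈ X) (hw : w ∈ X) :
    h w ≤ h z + ⟪G z, w - z⟫ + L / 2 * ‖w - z‖ ^ 2 := by
  set φ : ℝ → ℝ := fun θ => h (lineMap z w θ) - θ * ⟪G z, w - z⟫ - L / 2 * θ ^ 2 * ‖w - z‖ ^ 2
  have hφ (θ : ℝ) : HasDerivAt φ (⟪G (lineMap z w θ) - G z, w - z⟫ - L * θ * ‖w - z‖ ^ 2) θ := by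
    refine (((hasDerivAt_comp_lineMap_of_hasGradientAt hG z w θ).fun_sub
      ((hasDerivAt_id' θ).mul_const ⟪G z, w - z⟫)).fun_sub
      (((hasDerivAt_pow 2 θ).const_mul (L / 2)).mul_const (‖w - z‖ ^ 2))).congr_deriv ?_
    rw [inner_sub_left]; push_cast; ring
  have hφ_nonpos : ∀ θ ∈ interior (Icc (0 : ℝ) 1),
      ⟪G (lineMap z w θ) - G z, w - z⟫ - L * θ * ‖w - z‖ ^ 2 ≤ 0 := by
    intro θ hθ
    rw [interior_Icc] at hθ
    have hdist : ‖lineMap z w θ - z‖ = θ * ‖w - z‖ := by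
      rw [lineMap_apply_module', add_sub_cancel_right, norm_smul, Real.norm_of_nonneg hθ.1.le]
    have := calc ⟪G (lineMap z w θ) - G z, w - z⟫ ≤ ‖G (lineMap z w θ) - G z‖ * ‖w - z‖ :=
          real_inner_le_norm _ _
      _ ≤ L * (θ * ‖w - z‖) * ‖w - z‖ := by
          rw [← hdist]; gcongr; exact hGL _ (hX.lineMap_mem hz hw (Ioo_subset_Icc_self hθ)) _ hz
    linarith
  have hanti := antitoneOn_of_hasDerivWithinAt_nonpos (convex_Icc 0 1)
    (fun θ _ => (hφ θ).continuousAt.continuousWithinAt)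
    (fun θ _ => (hφ θ).hasDerivWithinAt) hφ_nonpos
  have := hanti (left_mem_Icc.2 zero_le_one) (right_mem_Icc.2 zero_le_one) zero_le_one
  simp only [φ, lineMap_apply_zero, lineMap_apply_one] at this
  linarith

theorem ConvexOn.three_point_le (hh : ConvexOn ℝ X h)
    (hG : ∀ z, HasGradientAt h (G z) z) {L : ℝ}
    (hGL : ∀ z ∈ X, ∀ w ∈ X, ‖G z - G w‖ ≤ L * ‖z - w‖) {x y z : E}
    (hx : x ∈ X) (hy : y ∈ X) (hz : z ∈ X) :
    h y ≤ h z + ⟪G x, y - z⟫ + L / 2 * ‖y - x‖ ^ 2 := by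
  have hdescent := le_add_inner_add_sq_of_lipschitz_gradient hh.1 hG hGL hx hy
  have hgrad := hh.add_inner_le_of_hasGradientAt_s10 hG hx hz
  have hsplit : ⟪G x, y - z⟫ = ⟪G x, y - x⟫ - ⟪G x, z - x⟫ := by
    rw [← inner_sub_right, sub_sub_sub_cancel_right]
  linarith

theorem lagrangian_le_add_inner_add_sq {ι : Type*} [Fintype ι] {f : E → ℝ} {Gf : E → E}
    {g : ι → E → ℝ} {Gg : ι → E → E} {Lf : ℝ} {Lg : ι → ℝ} {w : ι → ℝ}
    (hf : ConvexOn ℝ X f) (hfd : ∀ z, HasGradientAt f (Gf z) z)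
    (hGfLip : ∀ z ∈ X, ∀ w ∈ X, ‖Gf z - Gf w‖ ≤ Lf * ‖z - w‖)
    (hg : ∀ k, ConvexOn ℝ X (g k)) (hgd : ∀ k z, HasGradientAt (g k) (Gg k z) z)
    (hGgLip : ∀ k, ∀ z ∈ X, ∀ w ∈ X, ‖Gg k z - Gg k w‖ ≤ Lg k * ‖z - w‖)
    (hw : ∀ k, 0 ≤ w k) {x y z : E} (hx : x ∈ X) (hy : y ∈ X) (hz : z ∈ X) :
    f y + ∑ k, w k * g k y ≤ f z + ∑ k, w k * g k z + ⟪Gf x + ∑ k, w k • Gg k x, y - z⟫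
      + (Lf + ∑ k, w k * Lg k) / 2 * ‖y - x‖ ^ 2 := by
  have hsum : ∑ k, w k * g k y ≤ ∑ k, w k * (g k z + ⟪Gg k x, y - z⟫ + Lg k / 2 * ‖y - x‖ ^ 2) :=
    sum_le_sum fun k _ => mul_le_mul_of_nonneg_left
      ((hg k).three_point_le (hgd k) (hGgLip k) hx hy hz) (hw k)
  have hf' := hf.three_point_le hfd hGfLip hx hy hz
  simp only [mul_add, sum_add_distrib] at hsum
  simp only [inner_add_left, sum_inner, real_inner_smul_left, add_mul, add_div, sum_div,
    sum_mul]
  have : ∑ k, w k * (Lg k / 2 * ‖y - x‖ ^ 2) = ∑ k, w k * Lg k / 2 * ‖y - x‖ ^ 2 :=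
    sum_congr rfl fun k _ => by ring
  linarith

end Gradient

theorem two_mul_inner_le_of_projection {E : Type*} [NormedAddCommGroup E]
    [InnerProductSpace ℝ E] {X : Set E} (hX : Convex ℝ X) {x x' z d : E} {γ : ℝ}
    (hx' : x' ∈ X) (hproj : ∀ y ∈ X, ‖x' - (x - γ • d)‖ ≤ ‖y - (x - γ • d)‖) (hz : z ∈ X) :
    2 * γ * ⟪d, x' - z⟫ ≤ ‖z - x‖ ^ 2 - ‖z - x'‖ ^ 2 - ‖x' - x‖ ^ 2 := by
  have : Nonempty X := ⟨⟨x', hx'⟩⟩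
  have hinf : ‖x - γ • d - x'‖ = ⨅ y : X, ‖x - γ • d - y‖ := by
    refine le_antisymm (le_ciInf fun y => ?_) (ciInf_le ⟨0, ?_⟩ (⟨x', hx'⟩ : X))
    · simpa only [norm_sub_rev] using hproj y y.2
    · rintro _ ⟨y, rfl⟩; exact norm_nonneg _
  have hvi := (norm_eq_iInf_iff_real_inner_le_zero hX hx').1 hinf z hz
  have hsplit : x - γ • d - x' = (x - x') - γ • d := by abel
  rw [hsplit, inner_sub_left, real_inner_smul_left] at hvi
  have hpolar := norm_add_sq_real (x - x') (x' - z)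
  rw [sub_add_sub_cancel] at hpolar
  have h1 : ⟪d, z - x'⟫ = -⟪d, x' - z⟫ := by rw [← inner_neg_right, neg_sub]
  have h2 : ⟪x - x', z - x'⟫ = -⟪x - x', x' - z⟫ := by rw [← inner_neg_right, neg_sub]
  rw [h1, h2] at hvi
  rw [norm_sub_rev z x, norm_sub_rev z x', norm_sub_rev x' x]
  linarith

theorem sq_max_neg_add_le (q a : ℝ) : max (-a) (q + a) ^ 2 ≤ q ^ 2 + 2 * q * a + 2 * a ^ 2 := by
  rcases max_cases (-a) (q + a) with ⟨h, _⟩ | ⟨h, _⟩ <;> rw [h] <;>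
    nlinarith [sq_nonneg (q + a), sq_nonneg a]

section Queue

variable {ι : Type*} [Fintype ι]

theorem norm_sq_le_of_queue_update {Q Q' a : EuclideanSpace ℝ ι}
    (hQ' : ∀ k, Q' k = max (-a k) (Q k + a k)) :
    ‖Q'‖ ^ 2 ≤ ‖Q‖ ^ 2 + 2 * ⟪Q, a⟫ + 2 * ‖a‖ ^ 2 := by
  simp only [EuclideanSpace.norm_sq_eq, Real.norm_eq_abs, sq_abs, PiLp.inner_apply,
    RCLike.inner_apply, conj_trivial, mul_sum, ← sum_add_distrib]
  gcongr with k
  rw [hQ']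
  linarith [sq_max_neg_add_le (Q k) (a k)]

theorem inner_le_inner_of_nonneg {lam u v : EuclideanSpace ℝ ι} (hlam : ∀ k, 0 ≤ lam k)
    (huv : ∀ k, u k ≤ v k) : ⟪lam, u⟫ ≤ ⟪lam, v⟫ := by
  simp only [PiLp.inner_apply, RCLike.inner_apply, conj_trivial]
  gcongr with k
  · exact hlam k
  · exact huv k

theorem sum_inner_le_inner_of_le_sub {lam : EuclideanSpace ℝ ι} (hlam : ∀ k, 0 ≤ lam k)
    {Q a : ℕ → EuclideanSpace ℝ ι} (hQ0 : ∀ k, 0 ≤ Q 0 k)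
    (hQa : ∀ s k, a (s + 1) k ≤ Q (s + 1) k - Q s k) (N : ℕ) :
    ∑ s ∈ range N, ⟪lam, a (s + 1)⟫ ≤ ⟪lam, Q N⟫ := calc
  ∑ s ∈ range N, ⟪lam, a (s + 1)⟫ ≤ ∑ s ∈ range N, ⟪lam, Q (s + 1) - Q s⟫ :=
    sum_le_sum fun s _ => inner_le_inner_of_nonneg hlam (hQa s)
  _ = ⟪lam, Q N - Q 0⟫ := by rw [← inner_sum, sum_range_sub]
  _ ≤ ⟪lam, Q N⟫ := inner_le_inner_of_nonneg hlam fun k => by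
    simp only [PiLp.sub_apply]; linarith [hQ0 k]

theorem norm_le_of_eq_max_zero_neg {Q a : EuclideanSpace ℝ ι} (hQ : ∀ k, Q k = max 0 (-a k)) :
    ‖Q‖ ≤ ‖a‖ := by
  rw [← sq_le_sq₀ (norm_nonneg _) (norm_nonneg _), EuclideanSpace.norm_sq_eq,
    EuclideanSpace.norm_sq_eq]
  gcongr with k
  rw [hQ, Real.norm_eq_abs, Real.norm_eq_abs]
  simpa using abs_max_le_max_abs_abs (a := 0) (b := -a k)

end Queue

theorem le_add_add_of_sq_le {q a b c : ℝ} (ha : 0 ≤ a) (hb : 0 ≤ b) (hc : 0 ≤ c)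
    (hq : q ^ 2 ≤ 2 * a * q + b ^ 2 + c ^ 2) : q ≤ 2 * a + b + c := by
  nlinarith [mul_nonneg hb hc, mul_nonneg ha (add_nonneg hb hc)]

section QueueAlgorithm

variable {n m : ℕ}

@[simp]
theorem gvec_apply (g : Fin m → EuclideanSpace ℝ (Fin n) → ℝ) (x : EuclideanSpace ℝ (Fin n))
    (k : Fin m) : gvec g x k = g k x := rfl

theorem inner_gvec (a : EuclideanSpace ℝ (Fin m)) (g : Fin m → EuclideanSpace ℝ (Fin n) → ℝ)
    (x : EuclideanSpace ℝ (Fin n)) : ⟪a, gvec g x⟫ = ∑ k, a k * g k x := by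
  simp [PiLp.inner_apply, mul_comm]

theorem queue_drift_le {X : Set (EuclideanSpace ℝ (Fin n))}
    {f : EuclideanSpace ℝ (Fin n) → ℝ} {Gf : EuclideanSpace ℝ (Fin n) → EuclideanSpace ℝ (Fin n)}
    {g : Fin m → EuclideanSpace ℝ (Fin n) → ℝ}
    {Gg : Fin m → EuclideanSpace ℝ (Fin n) → EuclideanSpace ℝ (Fin n)}
    {Lf β γ : ℝ} {Lg lam Q Q' : EuclideanSpace ℝ (Fin m)} {x x' xstar d : EuclideanSpace ℝ (Fin n)}
    (hf : ConvexOn ℝ X f) (hfd : ∀ z, HasGradientAt f (Gf z) z)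
    (hGfLip : ∀ z ∈ X, ∀ w ∈ X, ‖Gf z - Gf w‖ ≤ Lf * ‖z - w‖)
    (hg : ∀ k, ConvexOn ℝ X (g k)) (hgd : ∀ k z, HasGradientAt (g k) (Gg k z) z)
    (hGgLip : ∀ k, ∀ z ∈ X, ∀ w ∈ X, ‖Gg k z - Gg k w‖ ≤ Lg k * ‖z - w‖)
    (hx : x ∈ X) (hx' : x' ∈ X) (hxs : xstar ∈ X)
    (hgLip : ‖gvec g x' - gvec g x‖ ≤ β * ‖x' - x‖) (hxsFeas : ∀ k, g k xstar ≤ 0)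
    (hdual : f xstar ≤ f x' + ⟪lam, gvec g x'⟫) (hw : ∀ k, 0 ≤ Q k + g k x)
    (hγ : 0 < γ) (hcoef : Lf + ⟪Q + gvec g x, Lg⟫ + β ^ 2 ≤ 1 / γ)
    (hd : d = Gf x + ∑ k, (Q k + g k x) • Gg k x)
    (hproj : ∀ y ∈ X, ‖x' - (x - γ • d)‖ ≤ ‖y - (x - γ • d)‖)
    (hQ' : ∀ k, Q' k = max (-g k x') (Q k + g k x')) :
    ‖Q'‖ ^ 2 - ‖Q‖ ^ 2 ≤ 2 * ⟪lam, gvec g x'⟫ + (‖xstar - x‖ ^ 2 / γ - ‖xstar - x'‖ ^ 2 / γ)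
      + (‖gvec g x'‖ ^ 2 - ‖gvec g x‖ ^ 2) := by
  set δ := ‖x' - x‖ ^ 2
  have hqueue := norm_sq_le_of_queue_update (Q := Q) (a := gvec g x') hQ'
  have hlag := lagrangian_le_add_inner_add_sq hf hfd hGfLip hg hgd hGgLip hw hx hx' hxs
  rw [← hd] at hlag
  have hstep : 2 * ⟪d, x' - xstar⟫ ≤ (‖xstar - x‖ ^ 2 - ‖xstar - x'‖ ^ 2 - δ) / γ := by
    rw [le_div_iff₀ hγ]
    linarith [two_mul_inner_le_of_projection hf.1 hx' hproj hxs]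
  have hfeas : ∑ k, (Q k + g k x) * g k xstar ≤ 0 :=
    sum_nonpos fun k _ => mul_nonpos_of_nonneg_of_nonpos (hw k) (hxsFeas k)
  have hsplit : ⟪Q, gvec g x'⟫ = ∑ k, (Q k + g k x) * g k x' - ⟪gvec g x', gvec g x⟫ := by
    simp only [inner_gvec, gvec_apply, add_mul, sum_add_distrib, mul_comm (g _ x')]
    ring
  have hpolar := norm_sub_sq_real (gvec g x') (gvec g x)
  have hgsq : ‖gvec g x' - gvec g x‖ ^ 2 ≤ β ^ 2 * δ := by
    rw [← mul_pow]; gcongr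
  have hLg : ∑ k, (Q k + g k x) * Lg k = ⟪Q + gvec g x, Lg⟫ := by
    simp [PiLp.inner_apply, mul_comm]
  have hquad : (Lf + ⟪Q + gvec g x, Lg⟫ + β ^ 2 - 1 / γ) * δ ≤ 0 :=
    mul_nonpos_of_nonpos_of_nonneg (by linarith) (sq_nonneg _)
  rw [hLg] at hlag
  have hδ : δ / γ = 1 / γ * δ := by ring
  rw [sub_div, sub_div] at hstep
  linarith

theorem norm_sq_le_of_queue_drift {X : Set (EuclideanSpace ℝ (Fin n))}
    {g : Fin m → EuclideanSpace ℝ (Fin n) → ℝ} {x : ℕ → EuclideanSpace ℝ (Fin n)}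
    {Q : ℕ → EuclideanSpace ℝ (Fin m)} {lam : EuclideanSpace ℝ (Fin m)}
    {xstar : EuclideanSpace ℝ (Fin n)} {R C γ : ℝ} (hγ : 0 < γ) (hR : ‖xstar - x 0‖ ≤ R)
    (hxX : ∀ t, x t ∈ X) (hgC : ∀ z ∈ X, ‖gvec g z‖ ≤ C) (hlam : ∀ k, 0 ≤ lam k)
    (hQ0 : ∀ k, Q 0 k = max 0 (-(g k (x 0))))
    (hQr : ∀ (t : ℕ) (k : Fin m),
      Q (t + 1) k = max (-(g k (x (t + 1)))) (Q t k + g k (x (t + 1))))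
    {N : ℕ} (hdrift : ∀ s < N, ‖Q (s + 1)‖ ^ 2 - ‖Q s‖ ^ 2 ≤ 2 * ⟪lam, gvec g (x (s + 1))⟫
      + (‖xstar - x s‖ ^ 2 / γ - ‖xstar - x (s + 1)‖ ^ 2 / γ)
      + (‖gvec g (x (s + 1))‖ ^ 2 - ‖gvec g (x s)‖ ^ 2)) :
    ‖Q N‖ ^ 2 ≤ 2 * ‖lam‖ * ‖Q N‖ + (R / √γ) ^ 2 + C ^ 2 := by
  have hsum := sum_le_sum fun s hs => hdrift s (mem_range.1 hs)
  rw [sum_range_sub (fun s => ‖Q s‖ ^ 2), sum_add_distrib, sum_add_distrib, ← mul_sum,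
    sum_range_sub' (fun s => ‖xstar - x s‖ ^ 2 / γ),
    sum_range_sub (fun s => ‖gvec g (x s)‖ ^ 2)] at hsum
  have hQ_incr (s : ℕ) (k : Fin m) : gvec g (x (s + 1)) k ≤ Q (s + 1) k - Q s k := by
    rw [gvec_apply, hQr s k]
    linarith [le_max_right (-(g k (x (s + 1)))) (Q s k + g k (x (s + 1)))]
  have hlam_sum : ∑ s ∈ range N, ⟪lam, gvec g (x (s + 1))⟫ ≤ ‖lam‖ * ‖Q N‖ :=
    (sum_inner_le_inner_of_le_sub (a := fun s => gvec g (x s)) hlam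
      (fun k => by rw [hQ0]; exact le_max_left _ _) hQ_incr N).trans (real_inner_le_norm _ _)
  have hQ0_le : ‖Q 0‖ ^ 2 ≤ ‖gvec g (x 0)‖ ^ 2 := by
    gcongr; exact norm_le_of_eq_max_zero_neg hQ0
  have hx0 : ‖xstar - x 0‖ ^ 2 / γ ≤ (R / √γ) ^ 2 := by
    rw [div_pow, Real.sq_sqrt hγ.le]; gcongr
  have hxN : 0 ≤ ‖xstar - x N‖ ^ 2 / γ := by positivity
  have hgN : ‖gvec g (x N)‖ ^ 2 ≤ C ^ 2 := by
    gcongr; exact hgC _ (hxX N)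
  linarith

end QueueAlgorithm

/-- Indexing convention: `x 0` is the initial point `x(−1)` and `x (t+1)` is the iterate `x(t)`,
so that `Q t` and `d t` are the paper's `Q(t)` and `d(t)`. -/
theorem virtual_queue_norm_uniform_bound_general {n m : ℕ}
    (X : Set (EuclideanSpace ℝ (Fin n)))
    (R : ℝ) (hR : ∀ z ∈ X, ∀ w ∈ X, ‖z - w‖ ≤ R)
    (f : EuclideanSpace ℝ (Fin n) → ℝ)
    (Gf : EuclideanSpace ℝ (Fin n) → EuclideanSpace ℝ (Fin n))
    (g : Fin m → EuclideanSpace ℝ (Fin n) → ℝ)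
    (Gg : Fin m → EuclideanSpace ℝ (Fin n) → EuclideanSpace ℝ (Fin n))
    (Lf : ℝ) (Lg : EuclideanSpace ℝ (Fin m)) (β C : ℝ)
    (hf : ConvexOn ℝ X f)
    (hfd : ∀ z, HasGradientAt f (Gf z) z)
    (hGfLip : ∀ z ∈ X, ∀ w ∈ X, ‖Gf z - Gf w‖ ≤ Lf * ‖z - w‖)
    (hg : ∀ k, ConvexOn ℝ X (g k))
    (hgd : ∀ (k : Fin m) z, HasGradientAt (g k) (Gg k z) z)
    (hGgLip : ∀ (k : Fin m), ∀ z ∈ X, ∀ w ∈ X, ‖Gg k z - Gg k w‖ ≤ Lg k * ‖z - w‖)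
    (hgLip : ∀ z ∈ X, ∀ w ∈ X, ‖gvec g z - gvec g w‖ ≤ β * ‖z - w‖)
    (hgC : ∀ z ∈ X, ‖gvec g z‖ ≤ C)
    (xstar : EuclideanSpace ℝ (Fin n)) (hxs : xstar ∈ X)
    (hxsFeas : ∀ k, g k xstar ≤ 0)
    (lam : EuclideanSpace ℝ (Fin m)) (hlam : ∀ k, 0 ≤ lam k)
    (hduality : IsGLB ((fun z => f z + ∑ k, lam k * g k z) '' X) (f xstar))
    (D : ℝ) (hD : D = β ^ 2 + Lf + 2 * ‖lam‖ * ‖Lg‖ + 2 * C * ‖Lg‖)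
    (γ : ℝ) (hγ : 0 < γ)
    (hγcond : D + ‖Lg‖ * R / Real.sqrt γ - 1 / γ ≤ 0)
    (x : ℕ → EuclideanSpace ℝ (Fin n)) (hxX : ∀ t, x t ∈ X)
    (Q : ℕ → EuclideanSpace ℝ (Fin m))
    (hQ0 : ∀ k, Q 0 k = max 0 (-(g k (x 0))))
    (hQr : ∀ (t : ℕ) (k : Fin m),
      Q (t + 1) k = max (-(g k (x (t + 1)))) (Q t k + g k (x (t + 1))))
    (d : ℕ → EuclideanSpace ℝ (Fin n))
    (hd : ∀ t, d t = Gf (x t) + ∑ k, (Q t k + g k (x t)) • Gg k (x t))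
    (hproj : ∀ t, ∀ y ∈ X,
      ‖x (t + 1) - (x t - γ • d t)‖ ≤ ‖y - (x t - γ • d t)‖) :
    ∀ t : ℕ, ‖Q t‖ ≤ 2 * ‖lam‖ + R / Real.sqrt γ + C := by
  have hC : 0 ≤ C := (norm_nonneg _).trans (hgC xstar hxs)
  have hR0 : 0 ≤ R := (norm_nonneg _).trans (hR xstar hxs xstar hxs)
  have hweights : ∀ s k, 0 ≤ Q s k + g k (x s) := by
    rintro (_ | s) k
    · rw [hQ0]; linarith [le_max_right 0 (-(g k (x 0)))]
    · rw [hQr]; linarith [le_max_left (-(g k (x (s + 1)))) (Q s k + g k (x (s + 1)))]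
  have hcoef (s : ℕ) (hs : ‖Q s‖ ≤ 2 * ‖lam‖ + R / √γ + C) :
      Lf + ⟪Q s + gvec g (x s), Lg⟫ + β ^ 2 ≤ 1 / γ := by
    have hw : ‖Q s + gvec g (x s)‖ ≤ 2 * ‖lam‖ + R / √γ + 2 * C :=
      (norm_add_le _ _).trans (by linarith [hgC _ (hxX s)])
    have := (real_inner_le_norm (Q s + gvec g (x s)) Lg).trans
      (mul_le_mul_of_nonneg_right hw (norm_nonneg Lg))
    rw [hD] at hγcond
    linear_combination this + hγcond
  intro t
  induction t using Nat.strong_induction_on with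
  | _ N ih =>
    refine le_add_add_of_sq_le (norm_nonneg lam) (div_nonneg hR0 (Real.sqrt_nonneg γ)) hC
      (norm_sq_le_of_queue_drift hγ (hR _ hxs _ (hxX 0)) hxX hgC hlam hQ0 hQr fun s hs => ?_)
    refine queue_drift_le hf hfd hGfLip hg hgd hGgLip (hxX s) (hxX (s + 1)) hxs
      (hgLip _ (hxX _) _ (hxX _)) hxsFeas ?_ (hweights s) hγ (hcoef s (ih s hs)) (hd s)
      (hproj s) (hQr s)
    rw [inner_gvec]
    exact hduality.1 ⟨_, hxX _, rfl⟩

/-- Uniform bound on the virtual queue norm (Lemma 7, part 1 of the paper).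
Indexing convention: `x 0` denotes the initial point `x(−1)` and `x (t+1)`
denotes the iterate `x(t)`; thus at iteration `t` of the paper,
`x(t) = x (t+1)`, `x(t−1) = x t`, and `Q(t) = Q t`. -/
theorem virtual_queue_norm_uniform_bound {n m : ℕ}
    (X : Set (EuclideanSpace ℝ (Fin n)))
    (hXne : X.Nonempty) (hXcv : Convex ℝ X) (hXcp : IsCompact X)
    (R : ℝ) (hR : ∀ z ∈ X, ∀ w ∈ X, ‖z - w‖ ≤ R)
    (f : EuclideanSpace ℝ (Fin n) → ℝ)
    (Gf : EuclideanSpace ℝ (Fin n) → EuclideanSpace ℝ (Fin n))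
    (g : Fin m → EuclideanSpace ℝ (Fin n) → ℝ)
    (Gg : Fin m → EuclideanSpace ℝ (Fin n) → EuclideanSpace ℝ (Fin n))
    (Lf : ℝ) (Lg : EuclideanSpace ℝ (Fin m)) (β C : ℝ)
    (hf : ConvexOn ℝ X f)
    (hfd : ∀ z, HasGradientAt f (Gf z) z)
    (hLf : 0 ≤ Lf)
    (hGfLip : ∀ z ∈ X, ∀ w ∈ X, ‖Gf z - Gf w‖ ≤ Lf * ‖z - w‖)
    (hg : ∀ k, ConvexOn ℝ X (g k))
    (hgd : ∀ (k : Fin m) z, HasGradientAt (g k) (Gg k z) z)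
    (hLg : ∀ k, 0 ≤ Lg k)
    (hGgLip : ∀ (k : Fin m), ∀ z ∈ X, ∀ w ∈ X, ‖Gg k z - Gg k w‖ ≤ Lg k * ‖z - w‖)
    (hgLip : ∀ z ∈ X, ∀ w ∈ X, ‖gvec g z - gvec g w‖ ≤ β * ‖z - w‖)
    (hgC : ∀ z ∈ X, ‖gvec g z‖ ≤ C)
    (xstar : EuclideanSpace ℝ (Fin n)) (hxs : xstar ∈ X)
    (hxsFeas : ∀ k, g k xstar ≤ 0)
    (hxsOpt : ∀ z ∈ X, (∀ k, g k z ≤ 0) → f xstar ≤ f z)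
    (lam : EuclideanSpace ℝ (Fin m)) (hlam : ∀ k, 0 ≤ lam k)
    (hduality : IsGLB ((fun z => f z + ∑ k, lam k * g k z) '' X) (f xstar))
    (D : ℝ) (hD : D = β ^ 2 + Lf + 2 * ‖lam‖ * ‖Lg‖ + 2 * C * ‖Lg‖)
    (γ : ℝ) (hγ : 0 < γ)
    (hγcond : D + ‖Lg‖ * R / Real.sqrt γ - 1 / γ ≤ 0)
    (x : ℕ → EuclideanSpace ℝ (Fin n)) (hxX : ∀ t, x t ∈ X)
    (Q : ℕ → EuclideanSpace ℝ (Fin m))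
    (hQ0 : ∀ k, Q 0 k = max 0 (-(g k (x 0))))
    (hQr : ∀ (t : ℕ) (k : Fin m),
      Q (t + 1) k = max (-(g k (x (t + 1)))) (Q t k + g k (x (t + 1))))
    (d : ℕ → EuclideanSpace ℝ (Fin n))
    (hd : ∀ t, d t = Gf (x t) + ∑ k, (Q t k + g k (x t)) • Gg k (x t))
    (hproj : ∀ t, ∀ y ∈ X,
      ‖x (t + 1) - (x t - γ • d t)‖ ≤ ‖y - (x t - γ • d t)‖) :
    ∀ t : ℕ, ‖Q t‖ ≤ 2 * ‖lam‖ + R / Real.sqrt γ + C :=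
  virtual_queue_norm_uniform_bound_general X R hR f Gf g Gg Lf Lg β C hf hfd hGfLip hg hgd hGgLip
    hgLip hgC xstar hxs hxsFeas lam hlam hduality D hD γ hγ hγcond x hxX Q hQ0 hQr d hd hproj
end
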